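/- Define f : ℝ → ℝ by f(x) := min{0, h(x)} − g(x) + |x|, where g(x) := ∫₀ˣ 2u·sin(1/u) du (integrand understood as 0 at u = 0) and h(x) := x²·sin(1/x) for x ≠ 0, h(0) := 0. Then the conclusion of the convergence lemma fails at x* = 0: for every r > 0 there exists ε ∈ (0, r) such that for every δ > 0 there exists a δ-stationary point x₀ of f with ε ≤ x₀ < r. -/

import Mathlib

open Filter Metric Set Real

noncomputable section

/-- Left derivative `f′₋(x) = d`: `(f y - f x)/(y - x) → d` as `y ↑ x`. -/
def HasLeftDeriv (f : ℝ → ℝ) (x d : ℝ) : Prop :=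
  Filter.Tendsto (fun y : ℝ => (f y - f x) / (y - x)) (nhdsWithin x (Set.Iio x)) (nhds d)

/-- Right derivative `f′₊(x) = d`: `(f y - f x)/(y - x) → d` as `y ↓ x`. -/
def HasRightDeriv (f : ℝ → ℝ) (x d : ℝ) : Prop :=
  Filter.Tendsto (fun y : ℝ => (f y - f x) / (y - x)) (nhdsWithin x (Set.Ioi x)) (nhds d)

/-- `x` is a `δ`-stationary point of `f : ℝ → ℝ`: `f′₋(x) ≤ δ` and `f′₊(x) ≥ -δ`. -/
def IsDeltaStationaryPt1 (f : ℝ → ℝ) (δ x : ℝ) : Prop :=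
  ∃ dm dp : ℝ, HasLeftDeriv f x dm ∧ HasRightDeriv f x dp ∧ dm ≤ δ ∧ -δ ≤ dp

/-- `x` is a stationary point of `f : ℝ → ℝ`: `f′₋(x) ≤ 0` and `f′₊(x) ≥ 0`. -/
def IsStationaryPt1 (f : ℝ → ℝ) (x : ℝ) : Prop :=
  IsDeltaStationaryPt1 f 0 x

/-- `g(x) = ∫₀ˣ 2u sin(1/u) du`, with the integrand extended by `0` at `u = 0`. -/
def gEx (x : ℝ) : ℝ := ∫ u in (0 : ℝ)..x, if u = 0 then 0 else 2 * u * Real.sin (1 / u)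

/-- `h(x) = x² sin(1/x)` for `x ≠ 0`, `h(0) = 0`. -/
def hEx (x : ℝ) : ℝ := if x = 0 then 0 else x ^ 2 * Real.sin (1 / x)

/-- `f(x) = min {0, h(x)} - g(x) + |x|`. -/
def fEx (x : ℝ) : ℝ := min 0 (hEx x) - gEx x + |x|

/-!
For `x > 0` with `sin (1 / x) < 0` we have `h < 0` near `x`, so there `f = h - g + x`, and the
term `2x sin(1/x)` of `h'` cancels `g'`: `f'(x) = 1 - cos (1 / x)`. At `1 / x = 2πk - t` with
`0 < t < π` this is `1 - cos t ≤ t² / 2`, as small as we like, while all these points lie in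
`[1 / (2πk), r)` once `2πk > 1 / r + 1`.
-/

open Topology

def gIntegrand (u : ℝ) : ℝ := if u = 0 then 0 else 2 * u * Real.sin (1 / u)

lemma abs_gIntegrand_le (u : ℝ) : |gIntegrand u| ≤ 2 * |u| := by
  unfold gIntegrand
  split_ifs
  · simp
  · rw [abs_mul, abs_mul, abs_two]
    nlinarith [abs_sin_le_one (1 / u), abs_nonneg u]

lemma continuous_gIntegrand : Continuous gIntegrand := by
  rw [continuous_iff_continuousAt]
  intro a
  rcases eq_or_ne a 0 with rfl | ha
  · have hlim : Tendsto (fun u : ℝ => 2 * |u|) (𝓝 0) (𝓝 0) := by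
      simpa using (continuous_abs.tendsto (0 : ℝ)).const_mul 2
    simpa [ContinuousAt, gIntegrand] using squeeze_zero_norm abs_gIntegrand_le hlim
  · have hsmooth : ContinuousAt (fun u : ℝ => 2 * u * Real.sin (1 / u)) a := by
      fun_prop (disch := exact ha)
    refine hsmooth.congr ?_
    filter_upwards [isOpen_ne.mem_nhds ha] with u hu
    simp [gIntegrand, hu]

lemma hasDerivAt_gEx {x : ℝ} (hx : x ≠ 0) : HasDerivAt gEx (2 * x * Real.sin (1 / x)) x := by
  have h := intervalIntegral.integral_hasDerivAt_right
    (continuous_gIntegrand.intervalIntegrable 0 x)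
    continuous_gIntegrand.stronglyMeasurable.stronglyMeasurableAtFilter
    continuous_gIntegrand.continuousAt
  rwa [show gIntegrand x = 2 * x * Real.sin (1 / x) by simp [gIntegrand, hx]] at h

lemma hasDerivAt_hEx {x : ℝ} (hx : x ≠ 0) :
    HasDerivAt hEx (2 * x * Real.sin (1 / x) - Real.cos (1 / x)) x := by
  have hsmooth := (hasDerivAt_pow 2 x).mul (hasDerivAt_inv hx).sin
  have heq : hEx =ᶠ[𝓝 x] (fun y : ℝ => y ^ 2) * fun y => Real.sin y⁻¹ := by
    filter_upwards [isOpen_ne.mem_nhds hx] with y hy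
    simp [hEx, hy]
  refine (hsmooth.congr_of_eventuallyEq heq).congr_deriv ?_
  field_simp
  ring

lemma hasDerivAt_fEx_of_sin_neg {x : ℝ} (hx : 0 < x) (hsin : Real.sin (1 / x) < 0) :
    HasDerivAt fEx (1 - Real.cos (1 / x)) x := by
  have hF := ((hasDerivAt_hEx hx.ne').sub (hasDerivAt_gEx hx.ne')).add (hasDerivAt_id x)
  have hnear : ∀ᶠ y in 𝓝 x, 0 < y ∧ Real.sin (1 / y) < 0 := by
    have hcont : ContinuousAt (fun y : ℝ => Real.sin (1 / y)) x := by
      fun_prop (disch := exact hx.ne')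
    exact (lt_mem_nhds hx).and (hcont.eventually (gt_mem_nhds hsin))
  have heq : fEx =ᶠ[𝓝 x] fun y => hEx y - gEx y + id y := by
    filter_upwards [hnear] with y ⟨hy, hsiny⟩
    have hh : hEx y ≤ 0 := by
      simp only [hEx, if_neg hy.ne']
      nlinarith [sq_nonneg y]
    simp [fEx, min_eq_right hh, abs_of_pos hy]
  exact (hF.congr_of_eventuallyEq heq).congr_deriv (by ring)

lemma HasDerivAt.hasLeftDeriv {f : ℝ → ℝ} {x d : ℝ} (h : HasDerivAt f d x) :
    HasLeftDeriv f x d := by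
  simp only [HasLeftDeriv, ← slope_def_field]
  exact (hasDerivAt_iff_tendsto_slope.mp h).mono_left
    (nhdsWithin_mono x fun _ hy => ne_of_lt hy)

lemma HasDerivAt.hasRightDeriv {f : ℝ → ℝ} {x d : ℝ} (h : HasDerivAt f d x) :
    HasRightDeriv f x d := by
  simp only [HasRightDeriv, ← slope_def_field]
  exact (hasDerivAt_iff_tendsto_slope.mp h).mono_left
    (nhdsWithin_mono x fun _ hy => ne_of_gt hy)

lemma HasDerivAt.isDeltaStationaryPt1 {f : ℝ → ℝ} {x d δ : ℝ} (h : HasDerivAt f d x)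
    (hd : |d| ≤ δ) : IsDeltaStationaryPt1 f δ x :=
  ⟨d, d, h.hasLeftDeriv, h.hasRightDeriv, (abs_le.mp hd).2, (abs_le.mp hd).1⟩

lemma isDeltaStationaryPt1_fEx_one_div_nat_mul_two_pi_sub {k : ℕ} {t δ : ℝ}
    (ht₀ : 0 < t) (htπ : t < π) (htk : t < k * (2 * π)) (hδ : 1 - Real.cos t ≤ δ) :
    IsDeltaStationaryPt1 fEx δ (1 / (k * (2 * π) - t)) := by
  have hx : 0 < 1 / (k * (2 * π) - t) := one_div_pos.mpr (sub_pos.mpr htk)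
  have hsin : Real.sin (1 / (1 / (k * (2 * π) - t))) < 0 := by
    rw [one_div_one_div, sin_nat_mul_two_pi_sub, neg_lt_zero]
    exact sin_pos_of_pos_of_lt_pi ht₀ htπ
  have hderiv := hasDerivAt_fEx_of_sin_neg hx hsin
  rw [one_div_one_div, cos_nat_mul_two_pi_sub] at hderiv
  exact hderiv.isDeltaStationaryPt1 (by rwa [abs_of_nonneg (sub_nonneg.mpr (cos_le_one t))])

/-- The conclusion of the convergence lemma fails for `f` at `x* = 0`: for every
`r > 0` there is `ε ∈ (0, r)` such that for every `δ > 0` there is a `δ`-stationary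
point `x₀` of `f` with `ε ≤ x₀ < r`. -/
theorem fEx_convergence_lemma_fails :
    ∀ r > 0, ∃ ε ∈ Set.Ioo (0 : ℝ) r, ∀ δ > 0,
      ∃ x₀ : ℝ, ε ≤ x₀ ∧ x₀ < r ∧ IsDeltaStationaryPt1 fEx δ x₀ := by
  intro r hr
  obtain ⟨k, hk⟩ := exists_nat_gt ((1 / r + 1) / (2 * π))
  set K : ℝ := k * (2 * π)
  have hK : 1 / r + 1 < K := (div_lt_iff₀ two_pi_pos).mp hk
  have hr' : 0 < 1 / r := one_div_pos.mpr hr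
  refine ⟨1 / K, ⟨one_div_pos.mpr (by linarith),
    (one_div_lt (by linarith) hr).mpr (by linarith)⟩, ?_⟩
  intro δ hδ
  set t := min 1 δ
  have ht₀ : 0 < t := lt_min one_pos hδ
  have ht₁ : t ≤ 1 := min_le_left 1 δ
  have htδ : t ≤ δ := min_le_right 1 δ
  have hcos : 1 - Real.cos t ≤ δ := by
    nlinarith [one_sub_sq_div_two_le_cos (x := t)]
  refine ⟨1 / (K - t), one_div_le_one_div_of_le (by linarith) (by linarith),
    (one_div_lt (by linarith) hr).mpr (by linarith), ?_⟩
  exact isDeltaStationaryPt1_fEx_one_div_nat_mul_two_pi_sub ht₀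
    (ht₁.trans_lt (by linarith [pi_gt_three])) (by linarith) hcos
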